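/- Let G be an infinite FC-group with finitely many automorphism orbits. Then G decomposes as G = Tor(G) × D, where Tor(G) is the (characteristic) torsion subgroup of G and D is a torsion-free divisible characteristic subgroup contained in the center Z(G). -/

import Mathlib

/-!
The index of the centralizer of `g` and the order of `g` are invariant under automorphisms, so
with finitely many `Aut(G)`-orbits both are bounded. Hence some `m > 0` makes every `g ^ m`
central, and some `e > 0` kills every torsion element. Two elements of an FC-group generate a
subgroup whose center has finite index; the transfer into that center, `h ↦ h ^ index`, is a
homomorphism, so torsion elements form a subgroup `T`. Pigeonhole on the orbits of the powers
`g ^ n ^ i` shows that modulo `T` every element is a `k`-th power of a central element, for every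
`k > 0`. Then `D = {z ^ e | z ∈ Z(G)}` is a torsion-free, divisible, central complement of `T`.
-/

/-- The number of automorphism orbits of a group `G`: the number of orbits of the
natural action of `Aut(G)` on `G`. -/
noncomputable def omegaOrbits (G : Type*) [Group G] : ℕ :=
  Nat.card (Quotient (MulAction.orbitRel (MulAut G) G))

/-- `G` is an FC-group: every element has a finite conjugacy class. -/
def IsFCGroup (G : Type*) [Group G] : Prop :=
  ∀ g : G, {h : G | IsConj g h}.Finite

/-- `G` has finitely many automorphism orbits. -/
def HasFinitelyManyAutOrbits (G : Type*) [Group G] : Prop :=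
  Finite (Quotient (MulAction.orbitRel (MulAut G) G))

open Subgroup

theorem isOfFinOrder_mul_of_finiteIndex_center {G : Type*} [Group G] [(center G).FiniteIndex]
    {x y : G} (hx : IsOfFinOrder x) (hy : IsOfFinOrder y) : IsOfFinOrder (x * y) := by
  -- The transfer `G →* center G` is `g ↦ g ^ (center G).index`, so `(x * y) ^ index` is the
  -- product of the commuting torsion elements `x ^ index` and `y ^ index`.
  set τ := MonoidHom.transferCenterPow G
  have hτ : IsOfFinOrder (τ (x * y)) := by
    rw [map_mul]
    exact Commute.isOfFinOrder_mul (Subtype.ext (mem_center_iff.mp (τ y).2 (τ x)))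
      (τ.isOfFinOrder hx) (τ.isOfFinOrder hy)
  have hpow := (center G).subtype.isOfFinOrder hτ
  rw [coe_subtype, MonoidHom.transferCenterPow_apply] at hpow
  exact hpow.of_pow FiniteIndex.index_ne_zero

theorem index_centralizer_singleton_eq_ncard {G : Type*} [Group G] (g : G) :
    (centralizer {g}).index = {h : G | IsConj g h}.ncard := by
  have hclass : {h : G | IsConj g h} = MulAction.orbit (ConjAct G) g := by
    ext h
    rw [Set.mem_ofPred_eq, ConjAct.mem_orbit_conjAct, isConj_comm]
  rw [hclass, ← MulAction.index_stabilizer, ConjAct.stabilizer_eq_centralizer]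
  rfl

theorem MulEquiv.index_centralizer_singleton_apply {G G' : Type*} [Group G] [Group G']
    (φ : G ≃* G') (g : G) : (centralizer {φ g}).index = (centralizer {g}).index := by
  have hcomap : (centralizer {φ g}).comap φ.toMonoidHom = centralizer {g} := by
    ext x
    simp only [mem_comap, mem_centralizer_singleton_iff, MulEquiv.coe_toMonoidHom, ← map_mul,
      φ.injective.eq_iff]
  rw [← hcomap, index_comap_of_surjective _ φ.surjective]

theorem centralizer_subgroupOf_closure_le_center {G : Type*} [Group G] (s : Set G) :
    (centralizer s).subgroupOf (closure s) ≤ center (closure s) := by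
  intro z hz
  rw [mem_subgroupOf] at hz
  rw [mem_center_iff]
  rintro ⟨h, hh⟩
  exact Subtype.ext (closure_le_centralizer_centralizer s hh _ hz).symm

namespace IsFCGroup

variable {G : Type*} [Group G]

theorem finiteIndex_centralizer (hFC : IsFCGroup G) (g : G) : (centralizer {g}).FiniteIndex :=
  ⟨by
    rw [index_centralizer_singleton_eq_ncard]
    exact ((Set.ncard_pos (hFC g)).mpr ⟨g, IsConj.refl g⟩).ne'⟩

theorem finiteIndex_center_closure (hFC : IsFCGroup G) {s : Set G} (hs : s.Finite) :
    (center (closure s)).FiniteIndex := by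
  have : Finite s := hs
  have : (centralizer s).FiniteIndex := by
    rw [centralizer_eq_iInf, iInf_subtype']
    exact finiteIndex_iInf fun g => hFC.finiteIndex_centralizer g
  exact finiteIndex_of_le (centralizer_subgroupOf_closure_le_center _)

theorem isOfFinOrder_mul (hFC : IsFCGroup G) {x y : G} (hx : IsOfFinOrder x)
    (hy : IsOfFinOrder y) : IsOfFinOrder (x * y) := by
  set H := closure {x, y}
  have := hFC.finiteIndex_center_closure (Set.toFinite {x, y})
  have hxH : x ∈ H := subset_closure (Set.mem_insert x {y})
  have hyH : y ∈ H := subset_closure (Set.mem_insert_of_mem x rfl)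
  have hx' : IsOfFinOrder (⟨x, hxH⟩ : H) := H.subtype_injective.isOfFinOrder_iff.mp hx
  have hy' : IsOfFinOrder (⟨y, hyH⟩ : H) := H.subtype_injective.isOfFinOrder_iff.mp hy
  have hxy := isOfFinOrder_mul_of_finiteIndex_center hx' hy'
  exact H.subtype_injective.isOfFinOrder_iff.mpr hxy

def torsion (hFC : IsFCGroup G) : Subgroup G where
  carrier := {g | IsOfFinOrder g}
  mul_mem' := hFC.isOfFinOrder_mul
  one_mem' := IsOfFinOrder.one
  inv_mem' := IsOfFinOrder.inv

theorem characteristic_torsion (hFC : IsFCGroup G) : hFC.torsion.Characteristic :=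
  characteristic_iff_map_le.mpr fun φ => by
    rintro _ ⟨g, hg, rfl⟩
    exact φ.toMonoidHom.isOfFinOrder hg

end IsFCGroup

namespace HasFinitelyManyAutOrbits

variable {G : Type*} [Group G]

theorem exists_bound (hfin : HasFinitelyManyAutOrbits G) (f : G → ℕ)
    (hf : ∀ (φ : MulAut G) (g : G), f (φ g) = f g) : ∃ b, ∀ g, f g ≤ b := by
  have : Finite (Quotient (MulAction.orbitRel (MulAut G) G)) := hfin
  let F : Quotient (MulAction.orbitRel (MulAut G) G) → ℕ := Quotient.lift f <| by
    rintro _ g ⟨φ, rfl⟩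
    exact hf φ g
  obtain ⟨b, hb⟩ := (Set.finite_range F).bddAbove
  exact ⟨b, fun g => hb ⟨Quotient.mk _ g, rfl⟩⟩

theorem exists_lt_aut_apply_eq (hfin : HasFinitelyManyAutOrbits G) (u : ℕ → G) :
    ∃ i j, i < j ∧ ∃ φ : MulAut G, φ (u j) = u i := by
  have : Finite (Quotient (MulAction.orbitRel (MulAut G) G)) := hfin
  obtain ⟨i, j, hne, heq⟩ := Finite.exists_ne_map_eq_of_infinite
    fun i => Quotient.mk (MulAction.orbitRel (MulAut G) G) (u i)
  rcases hne.lt_or_gt with h | h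
  · exact ⟨i, j, h, MulAction.mem_orbit_iff.mp (Quotient.exact heq)⟩
  · exact ⟨j, i, h, MulAction.mem_orbit_iff.mp (Quotient.exact heq.symm)⟩

theorem exists_pow_eq_one_of_isOfFinOrder (hfin : HasFinitelyManyAutOrbits G) :
    ∃ e, 0 < e ∧ ∀ g : G, IsOfFinOrder g → g ^ e = 1 := by
  obtain ⟨b, hb⟩ := hfin.exists_bound orderOf fun φ => orderOf_injective φ.toMonoidHom φ.injective
  refine ⟨b.factorial, b.factorial_pos, fun g hg => ?_⟩
  exact orderOf_dvd_iff_pow_eq_one.mp (Nat.dvd_factorial hg.orderOf_pos (hb g))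

theorem exists_pow_mem_center (hfin : HasFinitelyManyAutOrbits G) (hFC : IsFCGroup G) :
    ∃ m, 0 < m ∧ ∀ g : G, g ^ m ∈ center G := by
  obtain ⟨b, hb⟩ := hfin.exists_bound (fun g => (centralizer {g}).index)
    fun φ => φ.index_centralizer_singleton_apply
  refine ⟨b.factorial, b.factorial_pos, fun g => mem_center_iff.mpr fun h => ?_⟩
  have := pow_mem_of_index_ne_zero_of_dvd (hFC.finiteIndex_centralizer h).index_ne_zero g
    fun k hk hkb => Nat.dvd_factorial hk (hkb.trans (hb h))
  exact (mem_centralizer_singleton_iff.mp this).symm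

theorem exists_mem_center_isOfFinOrder_inv_pow_mul (hfin : HasFinitelyManyAutOrbits G) {m : ℕ}
    (hm₀ : 0 < m) (hm : ∀ g : G, g ^ m ∈ center G) (g : G) (k : ℕ) (hk : 0 < k) :
    ∃ w ∈ center G, IsOfFinOrder ((w ^ k)⁻¹ * g) := by
  -- With `n = m * k`, an automorphism `φ` mapping `g ^ n ^ j` to `g ^ n ^ i` (`i < j`) writes
  -- `g ^ n ^ i` as the `n ^ i`-th power of `w ^ k`, where `w = (φ g ^ n ^ (j - i - 1)) ^ m`
  -- is central.
  set n := m * k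
  obtain ⟨i, j, hij, φ, hφ⟩ := hfin.exists_lt_aut_apply_eq fun i => g ^ n ^ i
  obtain ⟨s, rfl⟩ := Nat.exists_eq_add_of_lt hij
  refine ⟨(φ g ^ n ^ s) ^ m, hm _, ?_⟩
  have hcomm : Commute (((φ g ^ n ^ s) ^ m) ^ k) g :=
    (mem_center_iff.mp (pow_mem (hm _) k) g).symm
  have hpow : (((φ g ^ n ^ s) ^ m) ^ k) ^ n ^ i = g ^ n ^ i := by
    rw [← hφ, map_pow, ← pow_mul, ← pow_mul, ← pow_mul]
    congr 1
    ring
  refine IsOfFinOrder.of_pow (n := n ^ i) ?_ (pow_pos (Nat.mul_pos hm₀ hk) i).ne'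
  rw [hcomm.inv_left.mul_pow, inv_pow, hpow, inv_mul_cancel]
  exact IsOfFinOrder.one

end HasFinitelyManyAutOrbits

section CenterPow

variable (G : Type*) [Group G] (e : ℕ)

def centerPow : Subgroup G where
  carrier := {x | ∃ z ∈ center G, z ^ e = x}
  mul_mem' := by
    rintro _ _ ⟨z₁, hz₁, rfl⟩ ⟨z₂, hz₂, rfl⟩
    exact ⟨z₁ * z₂, mul_mem hz₁ hz₂, Commute.mul_pow (mem_center_iff.mp hz₂ z₁) e⟩
  one_mem' := ⟨1, one_mem _, one_pow e⟩
  inv_mem' := by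
    rintro _ ⟨z, hz, rfl⟩
    exact ⟨z⁻¹, inv_mem hz, inv_pow z e⟩

theorem centerPow_le_center : centerPow G e ≤ center G := by
  rintro _ ⟨z, hz, rfl⟩
  exact pow_mem hz e

theorem characteristic_centerPow : (centerPow G e).Characteristic :=
  characteristic_iff_map_le.mpr fun φ => by
    rintro _ ⟨_, ⟨z, hz, rfl⟩, rfl⟩
    exact ⟨φ z, characteristic_iff_map_le.mp centerCharacteristic φ ⟨z, hz, rfl⟩,
      (map_pow φ z e).symm⟩

variable {G e}

theorem eq_one_of_mem_centerPow_of_isOfFinOrder (he₀ : 0 < e)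
    (he : ∀ g : G, IsOfFinOrder g → g ^ e = 1) {d : G} (hd : d ∈ centerPow G e)
    (hfo : IsOfFinOrder d) : d = 1 := by
  obtain ⟨z, -, rfl⟩ := hd
  exact he z (hfo.of_pow he₀.ne')

theorem exists_pow_eq_of_mem_centerPow (he₀ : 0 < e) (he : ∀ g : G, IsOfFinOrder g → g ^ e = 1)
    (hroot : ∀ g : G, ∀ k > 0, ∃ w ∈ center G, IsOfFinOrder ((w ^ k)⁻¹ * g))
    {d : G} (hd : d ∈ centerPow G e) {n : ℕ} (hn : 0 < n) : ∃ x ∈ centerPow G e, x ^ n = d := by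
  obtain ⟨z, hz, rfl⟩ := hd
  obtain ⟨w, hw, ht⟩ := hroot z (n * e) (Nat.mul_pos hn he₀)
  have hwz := he _ ht
  rw [(Commute.inv_left (mem_center_iff.mp hz (w ^ (n * e)))).mul_pow, inv_pow,
    inv_mul_eq_one] at hwz
  refine ⟨(w ^ e) ^ e, ⟨w ^ e, pow_mem hw e, rfl⟩, ?_⟩
  rw [← hwz, ← pow_mul, ← pow_mul, ← pow_mul]
  congr 1
  ring

end CenterPow

theorem stmt8_general (G : Type*) [Group G] (hFC : IsFCGroup G)
    (hfin : HasFinitelyManyAutOrbits G) :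
    ∃ T D : Subgroup G, (T : Set G) = {g : G | IsOfFinOrder g} ∧
      T.Characteristic ∧ D.Characteristic ∧ D ≤ Subgroup.center G ∧
      (∀ d ∈ D, d ≠ 1 → ¬ IsOfFinOrder d) ∧
      (∀ d ∈ D, ∀ n : ℕ, 0 < n → ∃ x ∈ D, x ^ n = d) ∧
      T ⊓ D = ⊥ ∧ T ⊔ D = ⊤ := by
  obtain ⟨m, hm₀, hm⟩ := hfin.exists_pow_mem_center hFC
  obtain ⟨e, he₀, he⟩ := hfin.exists_pow_eq_one_of_isOfFinOrder
  have hroot := hfin.exists_mem_center_isOfFinOrder_inv_pow_mul hm₀ hm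
  have htf : ∀ d ∈ centerPow G e, IsOfFinOrder d → d = 1 := fun d hd =>
    eq_one_of_mem_centerPow_of_isOfFinOrder he₀ he hd
  refine ⟨hFC.torsion, centerPow G e, rfl, hFC.characteristic_torsion,
    characteristic_centerPow G e, centerPow_le_center G e,
    fun d hd hne hfo => hne (htf d hd hfo),
    fun d hd n hn => exists_pow_eq_of_mem_centerPow he₀ he hroot hd hn, ?_, ?_⟩
  · exact le_bot_iff.mp fun x hx => mem_bot.mpr (htf x hx.2 hx.1)
  · refine eq_top_iff.mpr fun g _ => ?_
    obtain ⟨w, hw, ht⟩ := hroot g e he₀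
    rw [← mul_inv_cancel_left (w ^ e) g]
    exact mul_mem (mem_sup_right ⟨w, hw, rfl⟩) (mem_sup_left ht)

theorem stmt8 (G : Type*) [Group G] [Infinite G] (hFC : IsFCGroup G)
    (hfin : HasFinitelyManyAutOrbits G) :
    ∃ T D : Subgroup G, (T : Set G) = {g : G | IsOfFinOrder g} ∧
      T.Characteristic ∧ D.Characteristic ∧ D ≤ Subgroup.center G ∧
      (∀ d ∈ D, d ≠ 1 → ¬ IsOfFinOrder d) ∧
      (∀ d ∈ D, ∀ n : ℕ, 0 < n → ∃ x ∈ D, x ^ n = d) ∧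
      T ⊓ D = ⊥ ∧ T ⊔ D = ⊤ :=
  stmt8_general G hFC hfin
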